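/- Let A ∈ ℝ^{m×n}, L ∈ ℝ^{p×n}, b ∈ ℝ^m, λ > 0, ε > 0, and 0 < q ≤ 2. Define the smoothed ℓ_q objective J_ε(x) = ‖Ax − b‖₂² + λ Σ_{i=1}^{p} ((Lx)_i² + ε²)^{q/2}, and for a point y ∈ ℝ^n define the MM weights w_i(y) = ((Ly)_i² + ε²)^{(q−2)/2}. If x⁺ ∈ ℝ^n minimizes over x the weighted quadratic surrogate ‖Ax − b‖₂² + λ·(q/2)·Σ_{i=1}^{p} w_i(y)·(Lx)_i², then J_ε(x⁺) ≤ J_ε(y). -/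

import Mathlib

/-!
For `0 ≤ r ≤ 1` the map `t ↦ t ^ r` is concave on `[0, ∞)`, so it lies below its tangent line at
any `u > 0`. Applied with `r = q / 2` to `(Lx)ᵢ² + ε²` at `u = (Ly)ᵢ² + ε²`, this bounds the smoothed
penalty of `x` by that of `y` plus `q / 2` times the change of the weighted quadratic
`Σᵢ wᵢ(y) (Lx)ᵢ²`. Hence `J_ε` is majorized by the MM surrogate up to a constant, with equality at
`x = y`, and a minimizer of the surrogate cannot increase `J_ε`.
-/

open Finset

theorem Real.rpow_le_rpow_add_mul_rpow_sub_one_mul_sub {r a u : ℝ} (hr0 : 0 ≤ r) (hr1 : r ≤ 1)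
    (ha : 0 ≤ a) (hu : 0 < u) :
    a ^ r ≤ u ^ r + r * u ^ (r - 1) * (a - u) := by
  have hbernoulli : (a / u) ^ r ≤ 1 + r * (a / u - 1) := by
    simpa using rpow_one_add_le_one_add_mul_self (s := a / u - 1)
      (by linarith [div_nonneg ha hu.le]) hr0 hr1
  calc a ^ r = u ^ r * (a / u) ^ r := by
        rw [← Real.mul_rpow hu.le (div_nonneg ha hu.le), mul_div_cancel₀ a hu.ne']
    _ ≤ u ^ r * (1 + r * (a / u - 1)) := by gcongr
    _ = u ^ r + r * u ^ (r - 1) * (a - u) := by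
        rw [Real.rpow_sub_one hu.ne']
        field_simp

theorem sum_sq_add_sq_rpow_le {ι : Type*} [Fintype ι] {r ε : ℝ} (hr0 : 0 ≤ r) (hr1 : r ≤ 1)
    (hε : ε ≠ 0) (s t : ι → ℝ) :
    ∑ i, (s i ^ 2 + ε ^ 2) ^ r
      ≤ ∑ i, (t i ^ 2 + ε ^ 2) ^ r
        + r * (∑ i, (t i ^ 2 + ε ^ 2) ^ (r - 1) * s i ^ 2
          - ∑ i, (t i ^ 2 + ε ^ 2) ^ (r - 1) * t i ^ 2) := by
  rw [← sum_sub_distrib, mul_sum, ← sum_add_distrib]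
  refine sum_le_sum fun i _ => ?_
  have htangent := Real.rpow_le_rpow_add_mul_rpow_sub_one_mul_sub hr0 hr1
    (by positivity : 0 ≤ s i ^ 2 + ε ^ 2) (by positivity : 0 < t i ^ 2 + ε ^ 2)
  linear_combination htangent

open Finset in
/-- If `x⁺` minimizes the MM weighted quadratic surrogate
`‖Ax − b‖₂² + λ(q/2) Σᵢ wᵢ(y) (Lx)ᵢ²` with weights
`wᵢ(y) = ((Ly)ᵢ² + ε²)^{(q−2)/2}`, then it decreases the smoothed ℓ_q objective:
`J_ε(x⁺) ≤ J_ε(y)` where `J_ε(x) = ‖Ax − b‖₂² + λ Σᵢ ((Lx)ᵢ² + ε²)^{q/2}`. -/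
theorem mm_weighted_l2_descent
    (m n p : ℕ) (q ε lam : ℝ)
    (hq0 : 0 < q) (hq2 : q ≤ 2) (hε : 0 < ε) (hlam : 0 < lam)
    (A : Matrix (Fin m) (Fin n) ℝ) (L : Matrix (Fin p) (Fin n) ℝ)
    (b : Fin m → ℝ) (y xplus : Fin n → ℝ)
    (hmin : ∀ x : Fin n → ℝ,
      (∑ j, (A.mulVec xplus j - b j) ^ 2)
          + lam * (q / 2) *
            ∑ i, ((L.mulVec y i) ^ 2 + ε ^ 2) ^ ((q - 2) / 2) * (L.mulVec xplus i) ^ 2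
        ≤ (∑ j, (A.mulVec x j - b j) ^ 2)
          + lam * (q / 2) *
            ∑ i, ((L.mulVec y i) ^ 2 + ε ^ 2) ^ ((q - 2) / 2) * (L.mulVec x i) ^ 2) :
    (∑ j, (A.mulVec xplus j - b j) ^ 2)
        + lam * ∑ i, ((L.mulVec xplus i) ^ 2 + ε ^ 2) ^ (q / 2)
      ≤ (∑ j, (A.mulVec y j - b j) ^ 2)
        + lam * ∑ i, ((L.mulVec y i) ^ 2 + ε ^ 2) ^ (q / 2) := by
  have hmajorize := sum_sq_add_sq_rpow_le (by linarith : 0 ≤ q / 2) (by linarith : q / 2 ≤ 1)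
    hε.ne' (L.mulVec xplus) (L.mulVec y)
  rw [show q / 2 - 1 = (q - 2) / 2 by ring] at hmajorize
  linear_combination hmin y + lam * hmajorize
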